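/- Euler integral representation of the Gauss hypergeometric function: for |z| < 1 and Re(c) > Re(b) > 0, ₂F₁(a,b;c;z) = (Γ(c)/(Γ(b)Γ(c−b))) ∫₀¹ t^{b−1}(1−t)^{c−b−1}(1−zt)^{−a} dt. -/

import Mathlib

/-!
Expand `(1 - z t)^(-a) = Σ (a)_k / k! (z t)^k`; for `|z| < 1` this binomial series is dominated
on `[0, 1]` by the summable `Σ ‖(a)_k / k! z^k‖`, so it may be integrated term by term against
`t^(b-1) (1-t)^(c-b-1)`. The `k`-th term then is the Beta integral
`B(b+k, c-b) = Γ(b+k) Γ(c-b) / Γ(c+k)`, and `Γ(s+k) = (s)_k Γ(s)` turns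
`Γ(c) / (Γ(b) Γ(c-b)) · B(b+k, c-b)` into `(b)_k / (c)_k`.
-/

/-- The Pochhammer symbol (rising factorial) for complex arguments. -/
noncomputable def risingC (a : ℂ) (n : ℕ) : ℂ := ∏ i ∈ Finset.range n, (a + i)

/-- The Gauss hypergeometric function
`₂F₁(a,b;c;z) = Σ_{k≥0} (a)_k (b)_k/((c)_k k!) z^k`. -/
noncomputable def gaussHyper (a b c z : ℂ) : ℂ :=
  ∑' k : ℕ, risingC a k * risingC b k / (risingC c k * k.factorial) * z ^ k

open MeasureTheory Set

lemma risingC_eq_eval_ascPochhammer (a : ℂ) (n : ℕ) :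
    risingC a n = (ascPochhammer ℂ n).eval a := by
  induction n with
  | zero => simp [risingC]
  | succ n ih =>
    rw [risingC, Finset.prod_range_succ, ← risingC, ih, ascPochhammer_succ_right]
    simp

lemma ring_choose_add_sub_one_eq_risingC_div_factorial (a : ℂ) (n : ℕ) :
    Ring.choose (a + n - 1) n = risingC a n / n.factorial := by
  rw [← Ring.multichoose_eq, eq_div_iff (by exact_mod_cast n.factorial_ne_zero), mul_comm,
    ← nsmul_eq_mul, Ring.factorial_nsmul_multichoose_eq_ascPochhammer,
    Polynomial.ascPochhammer_smeval_eq_eval, risingC_eq_eval_ascPochhammer]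

lemma hasSum_risingC_div_factorial_mul_pow (a : ℂ) {w : ℂ} (hw : ‖w‖ < 1) :
    HasSum (fun k => risingC a k / k.factorial * w ^ k) ((1 - w) ^ (-a)) := by
  have hmem : w ∈ Metric.eball (0 : ℂ) 1 := by
    rw [← ENNReal.ofReal_one, Metric.eball_ofReal]; simpa using hw
  simpa [FormalMultilinearSeries.ofScalars_apply_eq,
    ring_choose_add_sub_one_eq_risingC_div_factorial, Complex.cpow_neg, mul_comm] using
    (Complex.one_div_one_sub_cpow_hasFPowerSeriesOnBall_zero a).hasSum hmem

lemma summable_norm_risingC_div_factorial_mul_pow (a : ℂ) {w : ℂ} (hw : ‖w‖ < 1) :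
    Summable (fun k => ‖risingC a k / k.factorial * w ^ k‖) := by
  have hmem : w ∈ Metric.eball (0 : ℂ) 1 := by
    rw [← ENNReal.ofReal_one, Metric.eball_ofReal]; simpa using hw
  have H := Complex.one_div_one_sub_cpow_hasFPowerSeriesOnBall_zero a
  simpa [FormalMultilinearSeries.ofScalars_apply_eq,
    ring_choose_add_sub_one_eq_risingC_div_factorial, mul_comm] using
    FormalMultilinearSeries.summable_norm_apply _ (Metric.eball_subset_eball H.r_le hmem)

namespace Complex

lemma Gamma_add_nat_eq_risingC_mul {s : ℂ} (hs : 0 < s.re) (n : ℕ) :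
    Gamma (s + n) = risingC s n * Gamma s := by
  have hpole : ∀ k : ℕ, s ≠ -k := fun k h => by
    have : (0 : ℝ) ≤ k := k.cast_nonneg
    rw [h, neg_re, natCast_re] at hs; linarith
  rw [risingC_eq_eval_ascPochhammer, ← Gamma_add_nat_div_Gamma_eq s hpole,
    div_mul_cancel₀ _ (Gamma_ne_zero_of_re_pos hs)]

lemma betaIntegral_add_nat (u v : ℂ) (k : ℕ) :
    betaIntegral (u + k) v =
      ∫ t in (0 : ℝ)..1, (t : ℂ) ^ (u - 1) * ((1 : ℂ) - t) ^ (v - 1) * (t : ℂ) ^ k := by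
  refine intervalIntegral.integral_congr_ae (Filter.Eventually.of_forall fun t ht => ?_)
  have ht0 : (t : ℂ) ≠ 0 := ofReal_ne_zero.mpr (uIoc_of_le (zero_le_one' ℝ) ▸ ht).1.ne'
  rw [mul_right_comm, ← cpow_natCast, ← cpow_add _ _ ht0, sub_add_eq_add_sub]

lemma Gamma_div_mul_betaIntegral_add_nat {b c : ℂ} (hb : 0 < b.re) (hbc : b.re < c.re) (k : ℕ) :
    Gamma c / (Gamma b * Gamma (c - b)) * betaIntegral (b + k) (c - b) =
      risingC b k / risingC c k := by
  have hc : 0 < c.re := hb.trans hbc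
  have hcb : 0 < (c - b).re := by rw [sub_re]; linarith
  have hbk : 0 < (b + k).re := by simp only [add_re, natCast_re]; positivity
  rw [betaIntegral_eq_Gamma_mul_div _ _ hbk hcb, show b + k + (c - b) = c + k by ring,
    Gamma_add_nat_eq_risingC_mul hb, Gamma_add_nat_eq_risingC_mul hc]
  have := Gamma_ne_zero_of_re_pos hb
  have := Gamma_ne_zero_of_re_pos hc
  have := Gamma_ne_zero_of_re_pos hcb
  field_simp

end Complex

lemma hasSum_intervalIntegral_mul_of_hasSum_pow {g f : ℝ → ℂ}
    (hg : IntervalIntegrable g volume 0 1) {p : ℕ → ℂ} (hp : Summable fun k => ‖p k‖)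
    (hf : ∀ t ∈ Ioc (0 : ℝ) 1, HasSum (fun k => p k * (t : ℂ) ^ k) (f t)) :
    HasSum (fun k => p k * ∫ t in (0 : ℝ)..1, g t * (t : ℂ) ^ k)
      (∫ t in (0 : ℝ)..1, g t * f t) := by
  simp only [← intervalIntegral.integral_const_mul]
  refine intervalIntegral.hasSum_integral_of_dominated_convergence
    (fun k t => ‖p k‖ * ‖g t‖) (fun k => ?_) (fun k => ?_) ?_ ?_ ?_
  · rw [uIoc_of_le zero_le_one]
    exact ((hg.1.aestronglyMeasurable.mul
      (by fun_prop : Continuous fun t : ℝ => (t : ℂ) ^ k).aestronglyMeasurable)).const_mul _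
  · refine Filter.Eventually.of_forall fun t ht => ?_
    rw [uIoc_of_le zero_le_one] at ht
    rw [norm_mul, norm_mul, norm_pow, Complex.norm_real, Real.norm_of_nonneg ht.1.le]
    exact mul_le_mul_of_nonneg_left
      (mul_le_of_le_one_right (norm_nonneg _) (pow_le_one₀ ht.1.le ht.2)) (norm_nonneg _)
  · exact Filter.Eventually.of_forall fun t _ => hp.mul_right _
  · simp_rw [tsum_mul_right]
    exact hg.norm.const_mul _
  · refine Filter.Eventually.of_forall fun t ht => ?_
    rw [uIoc_of_le zero_le_one] at ht
    simpa only [mul_left_comm] using (hf t ht).mul_left (g t)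

/-- Euler integral representation of the Gauss hypergeometric function:
for `|z| < 1` and `Re(c) > Re(b) > 0`,
`₂F₁(a,b;c;z) = (Γ(c)/(Γ(b)Γ(c−b))) ∫₀¹ t^{b−1}(1−t)^{c−b−1}(1−zt)^{−a} dt`. -/
theorem gaussHyper_euler_integral (a b c z : ℂ)
    (hz : ‖z‖ < 1) (hb : 0 < b.re) (hbc : b.re < c.re) :
    gaussHyper a b c z = Complex.Gamma c / (Complex.Gamma b * Complex.Gamma (c - b)) *
      ∫ t in (0 : ℝ)..1,
        (t : ℂ) ^ (b - 1) * ((1 : ℂ) - t) ^ (c - b - 1) * ((1 : ℂ) - z * t) ^ (-a) := by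
  have hcb : 0 < (c - b).re := by rw [Complex.sub_re]; linarith
  have hbinomial : ∀ t ∈ Ioc (0 : ℝ) 1,
      HasSum (fun k => risingC a k / k.factorial * z ^ k * (t : ℂ) ^ k)
        (((1 : ℂ) - z * t) ^ (-a)) := fun t ht => by
    have hzt : ‖z * t‖ < 1 := by
      rw [norm_mul, Complex.norm_real, Real.norm_of_nonneg ht.1.le]
      nlinarith [norm_nonneg z, ht.2]
    simpa only [mul_pow, mul_assoc] using hasSum_risingC_div_factorial_mul_pow a hzt
  have hsum := hasSum_intervalIntegral_mul_of_hasSum_pow (Complex.betaIntegral_convergent hb hcb)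
    (summable_norm_risingC_div_factorial_mul_pow a hz) hbinomial
  rw [← (hsum.mul_left _).tsum_eq, gaussHyper]
  refine tsum_congr fun k => ?_
  rw [← Complex.betaIntegral_add_nat, mul_left_comm,
    Complex.Gamma_div_mul_betaIntegral_add_nat hb hbc]
  ring
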